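/- (Power growth of the gauge.) Let ℓ ≥ 1, m ≥ 2ℓ, let (c,d) ∈ S (i.e. |c|^{2ℓ} + d² = 1) with c ≠ 0, take speed ϱ = c, and let (t,s) ∈ ℝ² with ⟨(c,d)|(t,s)⟩_ℓ ≥ 0. Then, along the disto-line t(τ) = t + cτ, s(τ) = s + (d/f_ℓ(c))(f_ℓ(t(τ)) − f_ℓ(t)), one has for every τ ≥ 0: ρ(t(τ),s(τ))^m − ρ(t,s)^m ≥ 2^{−m} τ^m. -/
import Mathlib


open MeasureTheory Real Set

noncomputable section

/-- `f_ℓ(σ) = σ|σ|^{ℓ-1}`. -/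
def fl (l : ℝ) (σ : ℝ) : ℝ := σ * |σ| ^ (l - 1)

/-- The disto-scalar product `⟨v|w⟩_ℓ`. -/
def distoDot (l : ℝ) (v w : ℝ × ℝ) : ℝ := fl l v.1 * fl l w.1 + v.2 * w.2

/-- The distorted determinant `Δ_ℓ(v;w)`. -/
def distoDet (l : ℝ) (v w : ℝ × ℝ) : ℝ := fl l v.1 * w.2 - v.2 * fl l w.1

/-- The quasihomogeneous gauge `ρ(t,s)`. -/
def qgauge (l : ℝ) (p : ℝ × ℝ) : ℝ := (|p.1| ^ (2 * l) + p.2 ^ 2) ^ (1 / (2 * l))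

/-- First coordinate of the disto-line through `(t,s)` parallel to `(c,d)` with speed `ϱ`. -/
def lineT (ϱ t : ℝ) (τ : ℝ) : ℝ := t + ϱ * τ

/-- Second coordinate of the disto-line through `(t,s)` parallel to `(c,d)` with speed `ϱ`. -/
def lineS (l c d ϱ t s : ℝ) (τ : ℝ) : ℝ := s + d / fl l c * (fl l (t + ϱ * τ) - fl l t)


lemma fl_of_nonneg {l : ℝ} (hl : 1 ≤ l) {σ : ℝ} (hσ : 0 ≤ σ) : fl l σ = σ ^ l := by
  rcases eq_or_lt_of_le hσ with h | h
  · simp [fl, ← h, Real.zero_rpow (by linarith : l ≠ 0)]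
  · rw [fl, abs_of_pos h]
    nth_rewrite 1 [← Real.rpow_one σ]
    rw [← Real.rpow_add h]
    norm_num

lemma fl_neg (l σ : ℝ) : fl l (-σ) = - fl l σ := by simp [fl]

lemma fl_of_nonpos {l : ℝ} (hl : 1 ≤ l) {σ : ℝ} (hσ : σ ≤ 0) : fl l σ = -(-σ) ^ l := by
  have h := fl_of_nonneg hl (neg_nonneg.2 hσ)
  rw [fl_neg] at h; linarith

lemma fl_sq {l : ℝ} (hl : 1 ≤ l) (σ : ℝ) : fl l σ ^ 2 = |σ| ^ (2 * l) := by
  rcases eq_or_ne σ 0 with h | h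
  · simp [h, fl, Real.zero_rpow (by positivity : (2:ℝ) * l ≠ 0)]
  · have ha : (0:ℝ) < |σ| := abs_pos.2 h
    rw [fl, mul_pow, ← sq_abs σ, ← Real.rpow_natCast (|σ| ^ (l-1)) 2,
      ← Real.rpow_mul ha.le, ← Real.rpow_natCast |σ| 2, ← Real.rpow_add ha]
    norm_num
    congr 1
    ring

lemma real_superadd {a b p : ℝ} (ha : 0 ≤ a) (hb : 0 ≤ b) (hp : 1 ≤ p) :
    a ^ p + b ^ p ≤ (a + b) ^ p := by
  have h := NNReal.add_rpow_le_rpow_add a.toNNReal b.toNNReal hp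
  have h2 : ((a.toNNReal ^ p + b.toNNReal ^ p : NNReal) : ℝ)
      ≤ (((a.toNNReal + b.toNNReal) ^ p : NNReal) : ℝ) := by exact_mod_cast h
  push_cast at h2
  rwa [Real.coe_toNNReal a ha, Real.coe_toNNReal b hb] at h2

lemma fl_gap {l : ℝ} (hl : 1 ≤ l) {x y : ℝ} (hxy : x ≤ y) :
    ((y - x) / 2) ^ l ≤ fl l y - fl l x := by
  have hl0 : (0:ℝ) ≤ l := by linarith
  have hh : 0 ≤ y - x := by linarith
  have key : ∀ u v : ℝ, 0 ≤ u → u ≤ v → (v - u) ^ l ≤ v ^ l - u ^ l := by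
    intro u v hu huv
    have := real_superadd hu (by linarith : (0:ℝ) ≤ v - u) hl
    have hv : u + (v - u) = v := by ring
    rw [hv] at this; linarith
  have half : ((y - x)/2 : ℝ) ^ l ≤ (y - x) ^ l :=
    Real.rpow_le_rpow (by linarith) (by linarith) hl0
  rcases le_or_gt 0 x with hx | hx
  · rw [fl_of_nonneg hl hx, fl_of_nonneg hl (by linarith)]
    exact half.trans (key x y hx hxy)
  · rcases le_or_gt y 0 with hy | hy
    · rw [fl_of_nonpos hl hy, fl_of_nonpos hl hx.le]
      refine half.trans ?_
      have := key (-y) (-x) (by linarith) (by linarith)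
      have h5 : (-x - -y) = y - x := by ring
      rw [h5] at this
      linarith
    · have h1 : fl l y - fl l x = y ^ l + (-x) ^ l := by
        rw [fl_of_nonneg hl hy.le, fl_of_nonpos hl hx.le]; ring
      rw [h1]
      rcases le_or_gt ((y - x)/2) y with h2 | h2
      · have := Real.rpow_le_rpow (by linarith) h2 hl0
        have h3 : (0:ℝ) ≤ (-x) ^ l := Real.rpow_nonneg (by linarith) l
        linarith
      · have h4 : (y - x)/2 ≤ -x := by linarith
        have := Real.rpow_le_rpow (by linarith) h4 hl0
        have h3 : (0:ℝ) ≤ y ^ l := Real.rpow_nonneg hy.le l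
        linarith

set_option maxHeartbeats 1000000 in
/-- power growth of the gauge. -/
theorem gauge_power_growth_along_line (l m : ℝ) (hl : 1 ≤ l) (hm : 2 * l ≤ m)
    (c d : ℝ) (hc : c ≠ 0) (hS : |c| ^ (2 * l) + d ^ 2 = 1)
    (t s : ℝ) (hdot : 0 ≤ distoDot l (c, d) (t, s)) :
    ∀ τ : ℝ, 0 ≤ τ →
      (2 : ℝ) ^ (-m) * τ ^ m ≤
        qgauge l (lineT c t τ, lineS l c d c t s τ) ^ m - qgauge l (t, s) ^ m := by
  intro τ hτ
  have h2l : (0:ℝ) < 2 * l := by linarith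
  set fc := fl l c with hfc
  set ft := fl l t with hft
  set u := fl l (t + c * τ) with hu
  have hcabs : (0:ℝ) < |c| := abs_pos.2 hc
  have hfcne : fc ≠ 0 := by
    rw [hfc, fl]
    exact mul_ne_zero hc (ne_of_gt (Real.rpow_pos_of_pos hcabs _))
  have hfc2 : fc ^ 2 = |c| ^ (2 * l) := fl_sq hl c
  have hS' : fc ^ 2 + d ^ 2 = 1 := by rw [hfc2]; exact hS
  -- abbreviations
  set A := |t + c * τ| ^ (2 * l) + (s + d / fc * (u - ft)) ^ 2 with hA
  set B := |t| ^ (2 * l) + s ^ 2 with hB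
  have hA0 : 0 ≤ A := by
    rw [hA]; positivity
  have hB0 : 0 ≤ B := by
    rw [hB]; positivity
  -- algebraic identity
  have hid : A - B = (u - ft) ^ 2 * (fc ^ 2 + d ^ 2) / fc ^ 2
      + 2 * ((u - ft) / fc) * (fc * ft + d * s) := by
    rw [hA, hB, ← fl_sq hl (t + c * τ), ← fl_sq hl t, ← hu, ← hft]
    field_simp
    ring
  rw [hS', mul_one] at hid
  -- sign of (u - ft)/fc and gap bound
  have hdot' : 0 ≤ fc * ft + d * s := hdot
  have hgap2 : (|c| * τ / 2) ^ (2 * l) ≤ (u - ft) ^ 2 ∧ 0 ≤ (u - ft) / fc := by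
    rcases lt_or_gt_of_ne hc with hcneg | hcpos
    · -- c < 0
      have hfcneg : fc < 0 := by
        rw [hfc, fl]
        exact mul_neg_of_neg_of_pos hcneg (Real.rpow_pos_of_pos hcabs _)
      have hle : t + c * τ ≤ t := by nlinarith
      have hg := fl_gap hl hle
      have he : (t - (t + c * τ)) / 2 = |c| * τ / 2 := by
        rw [abs_of_neg hcneg]; ring
      rw [he] at hg
      have hΔ : u - ft ≤ 0 := by
        have : (0:ℝ) ≤ (|c| * τ / 2) ^ l := Real.rpow_nonneg (by positivity) l
        rw [← hu, ← hft] at hg; linarith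
      constructor
      · have h1 : (|c| * τ / 2) ^ l ≤ ft - u := by rw [← hu, ← hft] at hg; linarith
        have h2 : ((|c| * τ / 2) ^ l) ^ 2 ≤ (ft - u) ^ 2 := by
          have h0 : (0:ℝ) ≤ (|c| * τ / 2) ^ l := Real.rpow_nonneg (by positivity) l
          nlinarith
        have h3 : ((|c| * τ / 2) ^ l) ^ 2 = (|c| * τ / 2) ^ (2 * l) := by
          rw [← Real.rpow_natCast ((|c| * τ / 2) ^ l) 2,
            ← Real.rpow_mul (by positivity : (0:ℝ) ≤ |c| * τ / 2)]
          norm_num; congr 1; ring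
        rw [← h3]
        nlinarith
      · rw [div_nonneg_iff]; right; exact ⟨hΔ, hfcneg.le⟩
    · -- c > 0
      have hfcpos : 0 < fc := by
        rw [hfc, fl]
        exact mul_pos hcpos (Real.rpow_pos_of_pos hcabs _)
      have hle : t ≤ t + c * τ := by nlinarith
      have hg := fl_gap hl hle
      have he : (t + c * τ - t) / 2 = |c| * τ / 2 := by
        rw [abs_of_pos hcpos]; ring
      rw [he] at hg
      rw [← hu, ← hft] at hg
      constructor
      · have h0 : (0:ℝ) ≤ (|c| * τ / 2) ^ l := Real.rpow_nonneg (by positivity) l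
        have h3 : ((|c| * τ / 2) ^ l) ^ 2 = (|c| * τ / 2) ^ (2 * l) := by
          rw [← Real.rpow_natCast ((|c| * τ / 2) ^ l) 2,
            ← Real.rpow_mul (by positivity : (0:ℝ) ≤ |c| * τ / 2)]
          norm_num; congr 1; ring
        rw [← h3]
        nlinarith
      · have h0 : (0:ℝ) ≤ (|c| * τ / 2) ^ l := Real.rpow_nonneg (by positivity) l
        exact div_nonneg (by linarith) hfcpos.le
  obtain ⟨hgap2, hsign⟩ := hgap2
  -- A - B ≥ (τ/2)^(2l)
  have hstep : (τ / 2) ^ (2 * l) ≤ A - B := by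
    have hdiv : (τ / 2) ^ (2 * l) ≤ (u - ft) ^ 2 / fc ^ 2 := by
      rw [hfc2, le_div_iff₀ (Real.rpow_pos_of_pos hcabs (2 * l))]
      have hmul : (|c| * τ / 2) ^ (2 * l) = |c| ^ (2 * l) * (τ / 2) ^ (2 * l) := by
        rw [show |c| * τ / 2 = |c| * (τ / 2) by ring,
          Real.mul_rpow hcabs.le (by positivity : (0:ℝ) ≤ τ / 2)]
      calc (τ / 2) ^ (2 * l) * |c| ^ (2 * l) = (|c| * τ / 2) ^ (2 * l) := by
            rw [hmul]; ring
        _ ≤ (u - ft) ^ 2 := hgap2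
    have hterm : 0 ≤ 2 * ((u - ft) / fc) * (fc * ft + d * s) := by positivity
    linarith [hid, hdiv, hterm]
  -- now the rpow manipulations
  have hAB : B ≤ A :=
    sub_nonneg.mp (le_trans (by positivity : (0:ℝ) ≤ (τ / 2) ^ (2 * l)) hstep)
  have hp1 : (1:ℝ) ≤ 1 / (2 * l) * m := by
    rw [one_div_mul_eq_div, le_div_iff₀ h2l]; linarith
  have hq1 : qgauge l (lineT c t τ, lineS l c d c t s τ) ^ m = A ^ (1 / (2 * l) * m) := by
    rw [qgauge, lineT, lineS, ← Real.rpow_mul hA0]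
  have hq2 : qgauge l (t, s) ^ m = B ^ (1 / (2 * l) * m) := by
    rw [qgauge, ← Real.rpow_mul hB0]
  rw [hq1, hq2]
  set p := 1 / (2 * l) * m with hpdef
  have hsup := real_superadd hB0 (by linarith : (0:ℝ) ≤ A - B) hp1
  have hBA : B + (A - B) = A := by ring
  rw [hBA] at hsup
  have hmono : ((τ / 2) ^ (2 * l)) ^ p ≤ (A - B) ^ p :=
    Real.rpow_le_rpow (by positivity) hstep (by linarith : (0:ℝ) ≤ p)
  have hcol : ((τ / 2) ^ (2 * l)) ^ p = (2:ℝ) ^ (-m) * τ ^ m := by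
    rw [← Real.rpow_mul (by positivity : (0:ℝ) ≤ τ / 2)]
    have : 2 * l * p = m := by rw [hpdef]; field_simp
    rw [this, div_eq_mul_inv, Real.mul_rpow hτ (by norm_num : (0:ℝ) ≤ 2⁻¹),
      Real.inv_rpow (by norm_num : (0:ℝ) ≤ 2), ← Real.rpow_neg (by norm_num : (0:ℝ) ≤ 2)]
    ring
  rw [← hcol]
  linarith


end
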